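/- arXiv:2512.02226 — 4 statements merged into one kernel-verified Lean document; each statement's English description precedes it below -/
import Mathlib

section
/- Let T : V → V be a semi-idempotent endomorphism of a finite-dimensional vector space V over a field. Then every eigenvalue of T is 0 or 1, and the 1-eigenspace of T coincides with the generalized 1-eigenspace (i.e., ker(T - 1) = ker((T-1)^n) for all n ≥ 1). -/
/-- If `T` is a semi-idempotent endomorphism of a finite-dimensional vector space
(i.e. `T` acts as the identity on the image of some power `T^N`), then every
eigenvalue of `T` is `0` or `1`, and the `1`-eigenspace coincides with the
generalized `1`-eigenspace: `ker (T - 1) = ker ((T - 1)^n)` for all `n ≥ 1`. -/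
theorem semiIdempotent_eigenvalues (F V : Type*) [Field F] [AddCommGroup V] [Module F V]
    [FiniteDimensional F V] (T : Module.End F V)
    (hT : ∃ N : ℕ, ∀ x ∈ LinearMap.range (T ^ N), T x = x) :
    (∀ μ : F, Module.End.HasEigenvalue T μ → μ = 0 ∨ μ = 1) ∧
      (∀ n : ℕ, 1 ≤ n → LinearMap.ker (T - 1) = LinearMap.ker ((T - 1) ^ n)) := by
  obtain ⟨N, hN⟩ := hT
  -- vectors fixed by `T` are fixed by any power of `T`
  have hfix : ∀ (M : ℕ) (y : V), T y = y → (T ^ M) y = y := by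
    intro M y hy
    induction M with
    | zero => simp
    | succ n ih => rw [pow_succ, Module.End.mul_apply, hy, ih]
  -- `T ^ N` kills the image of `T - 1`
  have hTS : ∀ x : V, (T ^ N) ((T - 1) x) = 0 := by
    intro x
    have h1 : T ((T ^ N) x) = (T ^ N) x := hN _ ⟨x, rfl⟩
    have h2 : (T ^ N) (T x) = T ((T ^ N) x) := by
      calc (T ^ N) (T x) = (T ^ (N + 1)) x := by rw [pow_succ]; rfl
        _ = T ((T ^ N) x) := by rw [pow_succ']; rfl
    have h3 : (T - 1) x = T x - x := by simp
    rw [h3, map_sub, h2, h1, sub_self]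
  -- `ker (T-1)^2 ≤ ker (T-1)`
  have hker2 : ∀ x : V, (T - 1) ((T - 1) x) = 0 → (T - 1) x = 0 := by
    intro x hx
    set y := (T - 1) x with hy
    have hTy : T y = y := by
      have h : T y - y = 0 := by
        simpa [LinearMap.sub_apply, Module.End.one_apply] using hx
      exact sub_eq_zero.mp h
    have h := hfix N y hTy
    rw [← h]
    exact hTS x
  constructor
  · intro μ hμ
    obtain ⟨v, hv⟩ := hμ.exists_hasEigenvector
    have hNv : (T ^ N) v = μ ^ N • v := hv.pow_apply N
    have hN1v : (T ^ (N + 1)) v = μ ^ (N + 1) • v := hv.pow_apply (N + 1)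
    have heq : (T ^ (N + 1)) v = (T ^ N) v := by
      calc (T ^ (N + 1)) v = T ((T ^ N) v) := by rw [pow_succ']; rfl
        _ = (T ^ N) v := hN _ ⟨v, rfl⟩
    rw [hN1v, hNv] at heq
    have hsm : (μ ^ (N + 1) - μ ^ N) • v = (0 : V) := by
      rw [sub_smul, heq, sub_self]
    have hμeq : μ ^ (N + 1) - μ ^ N = 0 := by
      by_contra h
      exact hv.2 (by simpa [smul_eq_zero, h] using hsm)
    have hfac : μ ^ N * (μ - 1) = 0 := by linear_combination hμeq
    rcases mul_eq_zero.mp hfac with h | h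
    · left; exact (pow_eq_zero_iff'.mp h).1
    · right; exact sub_eq_zero.mp h
  · intro n hn
    apply le_antisymm
    · -- ker (T-1) ≤ ker ((T-1)^n)
      intro x hx
      rw [LinearMap.mem_ker] at hx ⊢
      obtain ⟨m, rfl⟩ := Nat.exists_eq_add_of_le hn
      rw [add_comm 1 m, pow_succ, Module.End.mul_apply, hx, map_zero]
    · -- ker ((T-1)^n) ≤ ker (T-1)
      clear hn
      induction n with
      | zero =>
        intro x hx
        simp only [pow_zero, LinearMap.mem_ker, Module.End.one_apply] at hx
        simp [LinearMap.mem_ker, hx]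
      | succ m ih =>
        intro x hx
        rw [LinearMap.mem_ker] at hx ⊢
        rcases Nat.eq_zero_or_pos m with hm | hm
        · subst hm; simpa using hx
        · have hx' : ((T - 1) ^ m) ((T - 1) x) = 0 := by
            rw [← Module.End.mul_apply, ← pow_succ]
            exact hx
          have h := ih (LinearMap.mem_ker.mpr hx')
          exact hker2 x (LinearMap.mem_ker.mp h)
end

section
/- Let F be a finite field with q elements, n = r₁ + ... + r_s with all rᵢ > 0, and A = diag(J_{r₁}(0), ..., J_{r_s}(0)) the block-diagonal matrix of lower Jordan blocks with eigenvalue 0. Then the number of nilpotent n×n matrices over F obtainable by replacing the last column of A equals q^(n - r_s), and the number of non-nilpotent semi-idempotent matrices obtainable by replacing the last column of A also equals q^(n - r_s). -/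
open Polynomial

/-- The block-diagonal matrix `diag(J_{r 0}(0), …, J_{r (s-1)}(0))` of lower Jordan
blocks with eigenvalue `0`, of total size `n = r 0 + ⋯ + r (s-1)`: it has a `1` in
position `(i, i-1)` exactly when `i` is not a partial sum of the block sizes, and
`0` elsewhere. -/
noncomputable def jordanBlockDiag (F : Type*) [Field F] (s : ℕ) (r : ℕ → ℕ) (n : ℕ) :
    Matrix (Fin n) (Fin n) F :=
  open scoped Classical in
  fun i j =>
    if (i : ℕ) = (j : ℕ) + 1 ∧
        ¬ ∃ k ≤ s, (i : ℕ) = ∑ t ∈ Finset.range k, r t then 1 else 0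

/-- A square matrix is semi-idempotent iff its minimal polynomial divides
`x^ℓ (x - 1)` for some `ℓ`. -/
def IsSemiIdempotent {F : Type*} [Field F] {n : ℕ} (M : Matrix (Fin n) (Fin n) F) : Prop :=
  ∃ ℓ : ℕ, minpoly F M ∣ X ^ ℓ * (X - 1)


/-!
Reindex `Fin n = Fin p ⊕ Fin r_s`, where `p = r₁ + ⋯ + r_{s-1}`. A matrix `M` obtained from `A` by
replacing its last column `c = (u, d)` is then block upper triangular, with the nilpotent block
`diag(J_{r₁}(0), …, J_{r_{s-1}}(0))` in the top left and, in the bottom right, the companion matrix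
of `f_d = X^{r_s} - ∑ dⱼ Xʲ`, which is multiplication by `X` on `F[X]/(f_d)`. Hence
`charpoly M = X^p f_d`, and any polynomial killing `M` is divisible by `f_d`. So `M` is nilpotent
iff `f_d = X^{r_s}`, i.e. `d = 0`, and `M` is semi-idempotent but not nilpotent iff
`f_d = X^{r_s - 1} (X - 1)`, i.e. `d = e_{r_s}` (for the converse, Cayley–Hamilton gives
`minpoly M ∣ X^{n-1} (X - 1)`). In both cases `u` is free, which gives `q^p` matrices.
-/

open Matrix Finset

namespace Polynomial

variable {K : Type*} [Field K] {m : ℕ}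

noncomputable def companionPoly (d : Fin m → K) : K[X] :=
  X ^ m - ∑ j, C (d j) * X ^ (j : ℕ)

lemma companionPoly_monic (d : Fin m → K) : (companionPoly d).Monic :=
  monic_X_pow_sub (degree_sum_fin_lt d)

lemma natDegree_companionPoly (d : Fin m → K) : (companionPoly d).natDegree = m := by
  rw [companionPoly, natDegree_eq_of_degree_eq_some]
  rw [degree_sub_eq_left_of_degree_lt] <;> rw [degree_X_pow]
  exact degree_sum_fin_lt d

lemma coeff_companionPoly (d : Fin m → K) (j : Fin m) : (companionPoly d).coeff j = -d j := by
  simp [companionPoly, coeff_X_pow, j.isLt.ne, coeff_C_mul, Fin.val_inj]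

lemma companionPoly_injective : Function.Injective (companionPoly : (Fin m → K) → K[X]) :=
  fun d d' h => by
    ext j
    simpa [coeff_companionPoly] using congr_arg (coeff · j) h

lemma companionPoly_zero : companionPoly (0 : Fin m → K) = X ^ m := by
  simp [companionPoly]

lemma companionPoly_single_last :
    companionPoly (Pi.single (Fin.last m) 1 : Fin (m + 1) → K) = X ^ m * (X - 1) := by
  rw [companionPoly, Finset.sum_eq_single (Fin.last m)]
  · simp
    ring
  · intro j _ hj
    simp [hj]
  · simp

lemma X_pow_modByMonic_companionPoly (d : Fin m → K) :
    X ^ m %ₘ companionPoly d = ∑ j, C (d j) * X ^ (j : ℕ) := by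
  refine (div_modByMonic_unique 1 _ (companionPoly_monic d) ⟨by rw [companionPoly]; ring, ?_⟩).2
  rw [degree_eq_natDegree (companionPoly_monic d).ne_zero, natDegree_companionPoly]
  exact degree_sum_fin_lt d

lemma X_pow_modByMonic_companionPoly_of_lt (d : Fin m → K) {k : ℕ} (hk : k < m) :
    X ^ k %ₘ companionPoly d = X ^ k := by
  rw [(modByMonic_eq_self_iff (companionPoly_monic d)).2]
  rw [degree_X_pow, degree_eq_natDegree (companionPoly_monic d).ne_zero, natDegree_companionPoly]
  exact_mod_cast hk

lemma minpoly_root_companionPoly (d : Fin m → K) :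
    minpoly K (AdjoinRoot.root (companionPoly d)) = companionPoly d := by
  rw [AdjoinRoot.minpoly_root (companionPoly_monic d).ne_zero,
    (companionPoly_monic d).leadingCoeff, inv_one, C_1, mul_one]

lemma eq_X_pow_or_eq_X_pow_mul_X_sub_one_of_dvd {g : K[X]} (hg : g.Monic)
    (hdeg : g.natDegree = m + 1) {ℓ : ℕ} (h : g ∣ X ^ ℓ * (X - 1)) :
    g = X ^ (m + 1) ∨ g = X ^ m * (X - 1) := by
  obtain ⟨a, b, ha, hb, rfl⟩ := exists_dvd_and_dvd_of_dvd_mul h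
  obtain ⟨i, -, hi⟩ := (dvd_prime_pow prime_X ℓ).1 ha
  rw [← C_1] at hb ⊢
  rcases (irreducible_X_sub_C (1 : K)).dvd_iff.1 hb with hb | hb
  · have hab : a * b = X ^ i := eq_of_monic_of_associated hg (monic_X_pow i)
      (by simpa using hi.mul_mul (associated_one_iff_isUnit.2 hb))
    rw [hab, natDegree_X_pow] at hdeg
    exact .inl (hdeg ▸ hab)
  · have hab : a * b = X ^ i * (X - C 1) :=
      eq_of_monic_of_associated hg ((monic_X_pow i).mul (monic_X_sub_C 1)) (hi.mul_mul hb.symm)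
    rw [hab, natDegree_mul (pow_ne_zero _ X_ne_zero) (X_sub_C_ne_zero 1), natDegree_X_pow,
      natDegree_X_sub_C, Nat.add_right_cancel_iff] at hdeg
    exact .inr (hdeg ▸ hab)

end Polynomial

open AdjoinRoot Algebra in
lemma AdjoinRoot.leftMulMatrix_root_apply {K : Type*} [Field K] {g : K[X]} (hg : g.Monic)
    (i j : Fin (powerBasis' hg).dim) :
    leftMulMatrix (powerBasis' hg).basis (root g) i j = (X ^ ((j : ℕ) + 1) %ₘ g).coeff i := by
  rw [leftMulMatrix_eq_repr_mul, PowerBasis.coe_basis, powerBasis'_gen, ← pow_succ', ← mk_X,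
    ← map_pow]
  exact congr_arg (coeff · i) (modByMonicHom_mk hg _)

lemma IsSemiIdempotent.exists_pow_succ_eq {K : Type*} [Field K] {n : ℕ}
    {M : Matrix (Fin n) (Fin n) K} (h : IsSemiIdempotent M) : ∃ ℓ, M ^ (ℓ + 1) = M ^ ℓ := by
  obtain ⟨ℓ, hℓ⟩ := h
  exact ⟨ℓ, by simpa [mul_sub, ← pow_succ, sub_eq_zero] using minpoly.dvd_iff.1 hℓ⟩

namespace Matrix

variable {K : Type*} [Field K] {m : ℕ}

/-- The Jordan block `J_m(0)`. -/
def shiftMatrix (R : Type*) [Zero R] [One R] (m : ℕ) : Matrix (Fin m) (Fin m) R :=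
  fun i j => if (i : ℕ) = j + 1 then 1 else 0

def companion (d : Fin (m + 1) → K) : Matrix (Fin (m + 1)) (Fin (m + 1)) K :=
  (shiftMatrix K (m + 1)).updateCol (Fin.last m) d

open AdjoinRoot Algebra in
lemma companion_eq_reindex_leftMulMatrix (d : Fin (m + 1) → K) :
    letI pb := powerBasis' (companionPoly_monic d)
    letI e : Fin pb.dim ≃ Fin (m + 1) := finCongr (natDegree_companionPoly d)
    companion d = reindex e e (leftMulMatrix pb.basis pb.gen) := by
  ext i j
  rw [reindex_apply, submatrix_apply, powerBasis'_gen, leftMulMatrix_root_apply]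
  change _ = (X ^ ((j : ℕ) + 1) %ₘ companionPoly d).coeff i
  rw [companion, updateCol_apply]
  by_cases hj : j = Fin.last m
  · subst hj
    rw [if_pos rfl, Fin.val_last, X_pow_modByMonic_companionPoly, finsetSum_coeff,
      Finset.sum_eq_single i]
    · simp
    · intro k _ hk
      simp [coeff_C_mul, coeff_X_pow, Fin.val_inj, Ne.symm hk]
    · simp
  · have hjm : (j : ℕ) + 1 < m + 1 := by
      rw [Fin.ext_iff, Fin.val_last] at hj
      omega
    rw [if_neg hj, X_pow_modByMonic_companionPoly_of_lt d hjm, coeff_X_pow, shiftMatrix]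

open AdjoinRoot Algebra in
lemma minpoly_companion (d : Fin (m + 1) → K) : minpoly K (companion d) = companionPoly d := by
  rw [companion_eq_reindex_leftMulMatrix, ← coe_reindexAlgEquiv K K, minpoly.algEquiv_eq,
    minpoly.algHom_eq _ (leftMulMatrix_injective _), powerBasis'_gen, minpoly_root_companionPoly]

open AdjoinRoot Algebra in
lemma charpoly_companion (d : Fin (m + 1) → K) : (companion d).charpoly = companionPoly d := by
  rw [companion_eq_reindex_leftMulMatrix, charpoly_reindex, charpoly_leftMulMatrix,
    powerBasis'_gen, minpoly_root_companionPoly]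

variable {p : ℕ}

lemma isNilpotent_iff_charpoly {ι : Type*} [Fintype ι] [DecidableEq ι] (M : Matrix ι ι K) :
    IsNilpotent M ↔ M.charpoly = X ^ Fintype.card ι := by
  refine ⟨fun h => sub_eq_zero.1 (isNilpotent_charpoly_sub_pow_of_isNilpotent h).eq_zero,
    fun h => ⟨Fintype.card ι, ?_⟩⟩
  rw [← aeval_X_pow (R := K), ← h, aeval_self_charpoly]

lemma isNilpotent_of_forall_le_eq_zero {ι : Type*} [Fintype ι] [DecidableEq ι] [LinearOrder ι]
    {M : Matrix ι ι K} (hM : ∀ i j, i ≤ j → M i j = 0) : IsNilpotent M := by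
  rw [isNilpotent_iff_charpoly, charpoly, det_of_isLowerTriangular]
  · simp [hM]
  · intro i j (hij : i < j)
    simp [hij.ne, hM i j hij.le]

lemma fromBlocks_zero₂₁_pow {ι κ : Type*} [Fintype ι] [Fintype κ] [DecidableEq ι] [DecidableEq κ]
    (A : Matrix ι ι K) (B : Matrix ι κ K) (D : Matrix κ κ K) (k : ℕ) :
    ∃ B', fromBlocks A B 0 D ^ k = fromBlocks (A ^ k) B' 0 (D ^ k) := by
  induction k with
  | zero => exact ⟨0, by simp [fromBlocks_one]⟩
  | succ k ih =>
    obtain ⟨B', hB'⟩ := ih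
    exact ⟨A ^ k * B + B' * D, by simp [pow_succ, hB', fromBlocks_multiply]⟩

lemma reindex_updateCol_natAdd_last {N : Matrix (Fin p) (Fin p) K}
    {A : Matrix (Fin (p + (m + 1))) (Fin (p + (m + 1))) K}
    (hA : reindex finSumFinEquiv.symm finSumFinEquiv.symm A =
      fromBlocks N 0 0 (shiftMatrix K (m + 1)))
    (u : Fin p → K) (d : Fin (m + 1) → K) :
    reindex finSumFinEquiv.symm finSumFinEquiv.symm
        (A.updateCol (Fin.natAdd p (Fin.last m)) (Fin.append u d)) =
      fromBlocks N ((0 : Matrix (Fin p) (Fin (m + 1)) K).updateCol (Fin.last m) u) 0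
        (companion d) := by
  rw [reindex_updateCol, hA, finSumFinEquiv_symm_apply_natAdd]
  ext (i | i) (j | j) <;> simp [updateCol_apply, companion]

section

variable {N : Matrix (Fin p) (Fin p) K} {A : Matrix (Fin (p + (m + 1))) (Fin (p + (m + 1))) K}
  (hA : reindex finSumFinEquiv.symm finSumFinEquiv.symm A =
      fromBlocks N 0 0 (shiftMatrix K (m + 1)))
include hA

lemma charpoly_updateCol_natAdd_last (hN : IsNilpotent N) (u : Fin p → K) (d : Fin (m + 1) → K) :
    (A.updateCol (Fin.natAdd p (Fin.last m)) (Fin.append u d)).charpoly =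
      X ^ p * companionPoly d := by
  rw [← charpoly_reindex finSumFinEquiv.symm, reindex_updateCol_natAdd_last hA,
    charpoly_fromBlocks_zero₂₁, charpoly_companion, (isNilpotent_iff_charpoly N).1 hN,
    Fintype.card_fin]

lemma companionPoly_dvd_of_pow_succ_eq {u : Fin p → K} {d : Fin (m + 1) → K} {ℓ : ℕ}
    (h : A.updateCol (Fin.natAdd p (Fin.last m)) (Fin.append u d) ^ (ℓ + 1) =
      A.updateCol (Fin.natAdd p (Fin.last m)) (Fin.append u d) ^ ℓ) :
    companionPoly d ∣ X ^ ℓ * (X - 1) := by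
  have hblock := congr_arg (reindexAlgEquiv K K finSumFinEquiv.symm) h
  simp only [map_pow, coe_reindexAlgEquiv, reindex_updateCol_natAdd_last hA] at hblock
  obtain ⟨B₁, hB₁⟩ := fromBlocks_zero₂₁_pow N ((0 : Matrix _ _ K).updateCol (Fin.last m) u)
    (companion d) (ℓ + 1)
  obtain ⟨B₂, hB₂⟩ := fromBlocks_zero₂₁_pow N ((0 : Matrix _ _ K).updateCol (Fin.last m) u)
    (companion d) ℓ
  rw [hB₁, hB₂, fromBlocks_inj] at hblock
  rw [← minpoly_companion]
  apply minpoly.dvd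
  simp [mul_sub, ← pow_succ, hblock.2.2.2]

variable (hN : IsNilpotent N) (u : Fin p → K) (d : Fin (m + 1) → K)
include hN

lemma isNilpotent_updateCol_natAdd_last_iff :
    IsNilpotent (A.updateCol (Fin.natAdd p (Fin.last m)) (Fin.append u d)) ↔ d = 0 := by
  rw [isNilpotent_iff_charpoly, charpoly_updateCol_natAdd_last hA hN, Fintype.card_fin, pow_add,
    mul_right_inj' (pow_ne_zero _ X_ne_zero), ← companionPoly_zero,
    companionPoly_injective.eq_iff]

lemma isSemiIdempotent_and_not_isNilpotent_updateCol_natAdd_last_iff :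
    IsSemiIdempotent (A.updateCol (Fin.natAdd p (Fin.last m)) (Fin.append u d)) ∧
        ¬ IsNilpotent (A.updateCol (Fin.natAdd p (Fin.last m)) (Fin.append u d)) ↔
      d = Pi.single (Fin.last m) 1 := by
  rw [isNilpotent_updateCol_natAdd_last_iff hA hN]
  constructor
  · rintro ⟨hsemi, hd⟩
    obtain ⟨ℓ, hpow⟩ := hsemi.exists_pow_succ_eq
    rcases eq_X_pow_or_eq_X_pow_mul_X_sub_one_of_dvd (companionPoly_monic d)
      (natDegree_companionPoly d) (companionPoly_dvd_of_pow_succ_eq hA hpow) with h | h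
    · exact absurd (companionPoly_injective (h.trans companionPoly_zero.symm)) hd
    · exact companionPoly_injective (h.trans companionPoly_single_last.symm)
  · rintro rfl
    refine ⟨⟨p + m, (minpoly_dvd_charpoly _).trans ?_⟩, fun h => ?_⟩
    · rw [charpoly_updateCol_natAdd_last hA hN, companionPoly_single_last, pow_add, mul_assoc]
    · simpa using congr_fun h (Fin.last m)

end

section

variable {α : Type*}

lemma eq_updateCol_of_forall_ne {ι : Type*} [DecidableEq ι] {M A : Matrix ι ι α} {j₀ : ι}
    (h : ∀ i j, j ≠ j₀ → M i j = A i j) : M = A.updateCol j₀ fun i => M i j₀ := by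
  ext i j
  rw [updateCol_apply]
  split_ifs with hj
  · rw [hj]
  · exact h i j hj

lemma val_add_one_lt_iff_ne_natAdd_last (j : Fin (p + (m + 1))) :
    (j : ℕ) + 1 < p + (m + 1) ↔ j ≠ Fin.natAdd p (Fin.last m) := by
  rw [Ne, Fin.ext_iff, Fin.val_natAdd, Fin.val_last]
  omega

lemma card_updateCol_natAdd_last [Fintype α]
    (A : Matrix (Fin (p + (m + 1))) (Fin (p + (m + 1))) α)
    (P : Matrix (Fin (p + (m + 1))) (Fin (p + (m + 1))) α → Prop) (d₀ : Fin (m + 1) → α)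
    (hP : ∀ u d, P (A.updateCol (Fin.natAdd p (Fin.last m)) (Fin.append u d)) ↔ d = d₀) :
    Nat.card {M : Matrix (Fin (p + (m + 1))) (Fin (p + (m + 1))) α //
        (∀ i j : Fin (p + (m + 1)), (j : ℕ) + 1 < p + (m + 1) → M i j = A i j) ∧ P M} =
      Fintype.card α ^ p := by
  set j₀ := Fin.natAdd p (Fin.last m)
  let e : {M : Matrix (Fin (p + (m + 1))) (Fin (p + (m + 1))) α //
        (∀ i j : Fin (p + (m + 1)), (j : ℕ) + 1 < p + (m + 1) → M i j = A i j) ∧ P M} ≃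
      (Fin p → α) :=
    { toFun := fun M i => M.1 (Fin.castAdd _ i) j₀
      invFun := fun u => ⟨A.updateCol j₀ (Fin.append u d₀), fun i j hj =>
        updateCol_ne ((val_add_one_lt_iff_ne_natAdd_last j).1 hj), (hP u d₀).2 rfl⟩
      left_inv := by
        rintro ⟨M, hM, hPM⟩
        have hMA := eq_updateCol_of_forall_ne fun i j hj =>
          hM i j ((val_add_one_lt_iff_ne_natAdd_last j).2 hj)
        rw [← Fin.append_castAdd_natAdd (f := fun i => M i j₀)] at hMA
        rw [hMA, hP] at hPM
        exact Subtype.ext (hPM ▸ hMA).symm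
      right_inv := fun u => by
        ext i
        simp }
  rw [Nat.card_congr e, Nat.card_eq_fintype_card, Fintype.card_fun, Fintype.card_fin]

end

end Matrix

section JordanBlockDiag

open Matrix

variable {F : Type*} [Field F]

lemma isNilpotent_jordanBlockDiag (s : ℕ) (r : ℕ → ℕ) (n : ℕ) :
    IsNilpotent (jordanBlockDiag F s r n) :=
  isNilpotent_of_forall_le_eq_zero fun i j hij => by
    rw [jordanBlockDiag, if_neg]
    rw [← Fin.val_fin_le] at hij
    omega

lemma reindex_jordanBlockDiag_succ {s : ℕ} {r : ℕ → ℕ} {p m : ℕ} (hp : ∑ t ∈ range s, r t = p)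
    (hm : r s = m + 1) :
    reindex finSumFinEquiv.symm finSumFinEquiv.symm (jordanBlockDiag F (s + 1) r (p + (m + 1))) =
      fromBlocks (jordanBlockDiag F s r p) 0 0 (shiftMatrix F (m + 1)) := by
  have hle : ∀ k ≤ s, ∑ t ∈ range k, r t ≤ p := fun k hk =>
    hp ▸ sum_le_sum_of_subset (range_subset_range.2 hk)
  have hsucc : ∀ x, (∃ k ≤ s + 1, x = ∑ t ∈ range k, r t) ↔
      (∃ k ≤ s, x = ∑ t ∈ range k, r t) ∨ x = p + (m + 1) := by
    intro x
    simp only [Nat.le_succ_iff, or_and_right, exists_or, exists_eq_left, sum_range_succ, hp, hm]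
  ext (i | i) (j | j) <;>
    simp only [reindex_apply, submatrix_apply, Equiv.symm_symm, finSumFinEquiv_apply_left,
      finSumFinEquiv_apply_right, fromBlocks_apply₁₁, fromBlocks_apply₁₂, fromBlocks_apply₂₁,
      fromBlocks_apply₂₂, jordanBlockDiag, shiftMatrix, Fin.val_castAdd, Fin.val_natAdd]
  · refine if_congr (and_congr_right fun _ => not_congr ?_) rfl rfl
    rw [hsucc, or_iff_left (by omega)]
  · exact if_neg (by omega)
  · exact if_neg fun ⟨_, hne⟩ => hne ⟨s, by omega, by omega⟩
  · refine if_congr ⟨fun h => by omega, fun h => ⟨by omega, ?_⟩⟩ rfl rfl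
    rintro ⟨x, hx, heq⟩
    rcases (hsucc _).1 ⟨x, hx, heq⟩ with ⟨k, hk, hk'⟩ | h'
    · have := hle k hk
      omega
    · omega

end JordanBlockDiag

/-- Let `F` be a finite field with `q` elements and
`A = diag(J_{r₁}(0), …, J_{r_s}(0))` with all `rᵢ > 0` and `n = r₁ + ⋯ + r_s`.
Then the number of nilpotent matrices obtainable by replacing the last column of
`A` is `q^(n - r_s)`, as is the number of non-nilpotent semi-idempotent matrices
so obtainable. -/
theorem count_last_column_modifications (F : Type*) [Field F] [Fintype F]
    (s : ℕ) (hs : 0 < s) (r : ℕ → ℕ) (hr : ∀ i < s, 0 < r i)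
    (n : ℕ) (hn : n = ∑ i ∈ Finset.range s, r i) :
    Nat.card {M : Matrix (Fin n) (Fin n) F //
        (∀ i j : Fin n, (j : ℕ) + 1 < n → M i j = jordanBlockDiag F s r n i j) ∧
        IsNilpotent M}
      = Fintype.card F ^ (n - r (s - 1)) ∧
    Nat.card {M : Matrix (Fin n) (Fin n) F //
        (∀ i j : Fin n, (j : ℕ) + 1 < n → M i j = jordanBlockDiag F s r n i j) ∧
        IsSemiIdempotent M ∧ ¬ IsNilpotent M}
      = Fintype.card F ^ (n - r (s - 1)) := by
  obtain ⟨s, rfl⟩ := Nat.exists_eq_add_one_of_ne_zero hs.ne'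
  obtain ⟨m, hm⟩ := Nat.exists_eq_add_one_of_ne_zero (hr s (Nat.lt_succ_self s)).ne'
  obtain ⟨p, hp⟩ : ∃ p, ∑ t ∈ range s, r t = p := ⟨_, rfl⟩
  obtain rfl : n = p + (m + 1) := by rw [hn, sum_range_succ, hp, hm]
  rw [Nat.add_sub_cancel, hm, Nat.add_sub_cancel]
  have hA := reindex_jordanBlockDiag_succ (F := F) hp hm
  have hN := isNilpotent_jordanBlockDiag (F := F) s r p
  exact ⟨card_updateCol_natAdd_last _ _ _ (isNilpotent_updateCol_natAdd_last_iff hA hN),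
    card_updateCol_natAdd_last _ _ _
      (isSemiIdempotent_and_not_isNilpotent_updateCol_natAdd_last_iff hA hN)⟩
end

section
/- Let F be a finite field with q invertible in the field k, and let M_n be the monoid of n×n matrices over F. An element u of the ideal a_{n,r} ⊆ k[M_n] (span of matrices of rank ≤ r) is the two-sided unit of a_{n,r} if and only if: (1) [g⁻¹]·u·[g] = u for every g ∈ GL_n(F), and (2) u·[e_{n,r}] = [e_{n,r}], where e_{n,r} is the diagonal matrix with r ones followed by n-r zeros. -/
/-!
Every matrix of rank at most `r` factors as `g * e * t` with `g` invertible: an automorphism moves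
its column space into that of the idempotent `e = e_{n,r}`. Hence invariance under conjugation by
`GL_n` together with `u * [e] = [e]` makes `u` a left identity of `a_{n,r}`. Transposition induces
an anti-involution of `k[M_n]` preserving `a_{n,r}`, which turns the left identity `u` into a right
identity `uᵀ`; then `u = u * uᵀ = uᵀ`. Conversely, a two-sided identity `u` satisfies
`[g⁻¹] u [g] = [g⁻¹] u [g] u = [g⁻¹] ([g] u) = u`.
-/

open Module Matrix MonoidAlgebra

namespace Submodule

variable {K V : Type*} [Field K] [AddCommGroup V] [Module K V] [FiniteDimensional K V]

theorem exists_linearEquiv_extend_of_injective {W : Submodule K V} {f : W →ₗ[K] V}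
    (hf : Function.Injective f) : ∃ φ : V ≃ₗ[K] V, ∀ w : W, φ w = f w := by
  obtain ⟨C, hC⟩ := W.exists_isCompl
  obtain ⟨C', hC'⟩ := (LinearMap.range f).exists_isCompl
  have hCC' : finrank K C = finrank K C' := by
    have := finrank_add_eq_of_isCompl hC
    have := finrank_add_eq_of_isCompl hC'
    have := LinearMap.finrank_range_of_inj hf
    omega
  refine ⟨(prodEquivOfIsCompl W C hC).symm ≪≫ₗ
    ((LinearEquiv.ofInjective f hf).prodCongr (LinearEquiv.ofFinrankEq C C' hCC')) ≪≫ₗ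
    prodEquivOfIsCompl _ C' hC', fun w => ?_⟩
  simp

theorem exists_linearEquiv_map_le {W U : Submodule K V} (h : finrank K W ≤ finrank K U) :
    ∃ φ : V ≃ₗ[K] V, W.map (φ : V →ₗ[K] V) ≤ U := by
  obtain ⟨f, hf⟩ := finrank_le_iff_exists_linearMap.1 h
  obtain ⟨φ, hφ⟩ :=
    exists_linearEquiv_extend_of_injective (f := U.subtype ∘ₗ f) (U.injective_subtype.comp hf)
  refine ⟨φ, ?_⟩
  rintro _ ⟨w, hw, rfl⟩
  simp [hφ ⟨w, hw⟩]

end Submodule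

theorem Module.End.exists_eq_mul_mul_of_finrank_range_le {K V : Type*} [Field K] [AddCommGroup V]
    [Module K V] [FiniteDimensional K V] {f p : Module.End K V} (hp : IsIdempotentElem p)
    (h : finrank K (LinearMap.range f) ≤ finrank K (LinearMap.range p)) :
    ∃ (g : (Module.End K V)ˣ) (t : Module.End K V), f = g * p * t := by
  obtain ⟨φ, hφ⟩ := Submodule.exists_linearEquiv_map_le h
  refine ⟨LinearMap.GeneralLinearGroup.ofLinearEquiv φ.symm, φ * f, ?_⟩
  ext x
  obtain ⟨y, hy⟩ := hφ ⟨f x, LinearMap.mem_range_self f x, rfl⟩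
  have hpφ : p (φ (f x)) = φ (f x) := by
    rw [← LinearEquiv.coe_coe, ← hy, ← Module.End.mul_apply, hp.eq]
  simp [hpφ]

theorem Matrix.exists_eq_mul_mul_of_rank_le {K n : Type*} [Field K] [Fintype n] [DecidableEq n]
    {e m : Matrix n n K} (he : IsIdempotentElem e) (h : m.rank ≤ e.rank) :
    ∃ (g : GL n K) (t : Matrix n n K), m = g * e * t := by
  obtain ⟨g, t, hgt⟩ :=
    Module.End.exists_eq_mul_mul_of_finrank_range_le (he.map (Matrix.toLinAlgEquiv' (R := K))) h
  have hg : toLin' (GeneralLinearGroup.toLin.symm g : Matrix n n K) = g := by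
    rw [toLin'_apply', ← GeneralLinearGroup.coe_toLin, MulEquiv.apply_symm_apply]
  refine ⟨GeneralLinearGroup.toLin.symm g, LinearMap.toMatrix' t, toLin'.injective ?_⟩
  rw [toLin'_mul, toLin'_mul, hg, toLin'_toMatrix']
  exact hgt

def IsIdentityOn {R : Type*} [Mul R] (A : Set R) (u : R) : Prop :=
  ∀ x ∈ A, u * x = x ∧ x * u = x

section IdentityOn

variable {R : Type*} {A : Set R} {u : R}

theorem IsIdentityOn.mul_mul_eq_self [Monoid R] (hu : IsIdentityOn A u) {a b : R} (hab : a * b = 1)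
    (hb : b * u ∈ A) (haub : a * u * b ∈ A) : a * u * b = u :=
  calc a * u * b = a * u * b * u := ((hu _ haub).2).symm
    _ = a * (u * (b * u)) := by simp only [mul_assoc]
    _ = a * (b * u) := by rw [(hu _ hb).1]
    _ = u := by rw [← mul_assoc, hab, one_mul]

theorem isIdentityOn_of_antiInvolutive [Mul R] (τ : R → R)
    (hτ_mul : ∀ x y, τ (x * y) = τ y * τ x) (hτ : Function.Involutive τ)
    (hτA : ∀ x ∈ A, τ x ∈ A) (hu : u ∈ A) (hleft : ∀ x ∈ A, u * x = x) : IsIdentityOn A u := by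
  have hright : ∀ x ∈ A, x * τ u = x := fun x hx =>
    calc x * τ u = τ (τ x) * τ u := by rw [hτ x]
      _ = τ (u * τ x) := (hτ_mul _ _).symm
      _ = x := by rw [hleft _ (hτA x hx), hτ x]
  have hu_eq : u = τ u := (hright u hu).symm.trans (hleft _ (hτA u hu))
  exact fun x hx => ⟨hleft x hx, by rw [hu_eq]; exact hright x hx⟩

end IdentityOn

namespace MonoidAlgebra

variable {k M : Type*} [CommSemiring k]

theorem span_setOf_single_eq_supported (p : M → Prop) :
    Submodule.span k {y : k[M] | ∃ m, p m ∧ y = single m 1} = supported k k {m | p m} := by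
  rw [supported_eq_span_single]
  congr 1
  ext y
  simp [eq_comm]

theorem supported_le_comap {S : Set M} {f : k[M] →ₗ[k] k[M]}
    (hf : ∀ m ∈ S, f (single m 1) ∈ supported k k S) :
    supported k k S ≤ (supported k k S).comap f :=
  calc supported k k S = Submodule.span k ((fun m ↦ single m 1) '' S) :=
        supported_eq_span_single ..
    _ ≤ _ := Submodule.span_le.2 <| by rintro _ ⟨m, hm, rfl⟩; exact hf m hm

theorem single_one_mem_supported {S : Set M} {m : M} (hm : m ∈ S) :
    single m (1 : k) ∈ supported k k S :=
  supported_eq_span_single k S ▸ Submodule.subset_span ⟨m, hm, rfl⟩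

theorem mapDomain_involutive {T : M → M} (hT : Function.Involutive T) :
    Function.Involutive (mapDomain (R := k) T) := fun x => by
  induction x using MonoidAlgebra.induction_linear with
  | zero => simp
  | add x x' hx hx' => simp only [mapDomain_add, hx, hx']
  | single a c => simp [hT a]

theorem mapDomain_mul_rev [Mul M] {T : M → M} (hT : ∀ a b, T (a * b) = T b * T a) (x y : k[M]) :
    mapDomain T (x * y) = mapDomain T y * mapDomain T x := by
  induction x using MonoidAlgebra.induction_linear with
  | zero => simp
  | add x x' hx hx' => simp only [add_mul, mapDomain_add, hx, hx', mul_add]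
  | single a c =>
    induction y using MonoidAlgebra.induction_linear with
    | zero => simp
    | add y y' hy hy' => simp only [mul_add, mapDomain_add, hy, hy', add_mul]
    | single b d => simp [hT, mul_comm c d]

section Monoid

variable [Monoid M] {S : Set M}

theorem mul_eq_self_of_mem_supported {u x : k[M]} (h : ∀ m ∈ S, u * single m 1 = single m 1)
    (hx : x ∈ supported k k S) : u * x = x := by
  rw [supported_eq_span_single] at hx
  refine (Submodule.span_le (p := LinearMap.eqLocus (LinearMap.mulLeft k u) LinearMap.id)).2 ?_ hx
  rintro _ ⟨m, hm, rfl⟩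
  exact h m hm

theorem single_mul_mul_single_mem_supported (hS : ∀ a b, ∀ m ∈ S, a * m * b ∈ S) (a b : M)
    {x : k[M]} (hx : x ∈ supported k k S) : single a 1 * x * single b 1 ∈ supported k k S := by
  refine supported_le_comap (f := LinearMap.mulLeftRight k (single a (1 : k), single b (1 : k)))
    (fun m hm => ?_) hx
  rw [LinearMap.mulLeftRight_apply, single_mul_single, single_mul_single, mul_one, mul_one]
  exact single_one_mem_supported (hS a b m hm)

theorem mul_single_eq_self_of_conj_eq {u : k[M]} {e : M}
    (hconj : ∀ g : Mˣ, single (↑g⁻¹ : M) 1 * u * single (g : M) 1 = u)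
    (he : u * single e 1 = single e 1) (g : Mˣ) (t : M) :
    u * single (↑g * e * t) 1 = single (↑g * e * t) 1 := by
  have hcomm : u * single (g : M) 1 = single (g : M) 1 * u := by
    conv_rhs => rw [← hconj g]
    simp [← mul_assoc, ← one_def]
  simp only [← of_apply, map_mul] at hcomm he ⊢
  rw [← mul_assoc, ← mul_assoc, hcomm, mul_assoc _ u, he]

theorem single_inv_mul_mul_single_eq_of_isIdentityOn (hS : ∀ a b, ∀ m ∈ S, a * m * b ∈ S)
    {u : k[M]} (hu : u ∈ supported k k S) (h : IsIdentityOn (supported k k S : Set k[M]) u)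
    (g : Mˣ) :
    single (↑g⁻¹ : M) 1 * u * single (g : M) 1 = u := by
  refine h.mul_mul_eq_self (by simp [← one_def]) ?_
    (single_mul_mul_single_mem_supported hS _ _ hu)
  simpa [← one_def] using single_mul_mul_single_mem_supported hS (g : M) 1 hu

theorem isIdentityOn_supported_of_conj_eq {T : M → M} (hT_mul : ∀ a b, T (a * b) = T b * T a)
    (hT : Function.Involutive T) (hTS : ∀ m ∈ S, T m ∈ S) {e : M}
    (hfactor : ∀ m ∈ S, ∃ (g : Mˣ) (t : M), m = g * e * t) {u : k[M]}
    (hu : u ∈ supported k k S)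
    (hconj : ∀ g : Mˣ, single (↑g⁻¹ : M) 1 * u * single (g : M) 1 = u)
    (he : u * single e 1 = single e 1) : IsIdentityOn (supported k k S : Set k[M]) u := by
  refine isIdentityOn_of_antiInvolutive (mapDomain T) (mapDomain_mul_rev hT_mul)
    (mapDomain_involutive hT) (fun x hx => ?_) hu
    (fun x => mul_eq_self_of_mem_supported fun m hm => ?_)
  · exact supported_le_comap (f := mapDomainLinearMap k k T)
      (fun m hm => by simpa using single_one_mem_supported (hTS m hm)) hx
  · obtain ⟨g, t, rfl⟩ := hfactor m hm
    exact mul_single_eq_self_of_conj_eq hconj he g t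

end Monoid

end MonoidAlgebra

namespace Matrix

theorem isIdempotentElem_diagonal_ite {R n : Type*} [Semiring R] [Fintype n] [DecidableEq n]
    (p : n → Prop) [DecidablePred p] :
    IsIdempotentElem (diagonal fun i => if p i then (1 : R) else 0) := by
  rw [IsIdempotentElem, diagonal_mul_diagonal]
  congr 1 with i
  split_ifs <;> simp

theorem rank_diagonal_ite_val_lt {K : Type*} [Field K] (n r : ℕ) :
    (diagonal fun i : Fin n => if (i : ℕ) < r then (1 : K) else 0).rank = min n r := by
  classical
  simp [rank_diagonal, Fintype.card_subtype, Fin.card_filter_val_lt]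

end Matrix

theorem kuhn_criterion_general (F : Type*) [Field F] (n r : ℕ) (k : Type*) [Field k]
    (u : MonoidAlgebra k (Matrix (Fin n) (Fin n) F))
    (hu : u ∈ Submodule.span k
      {y : MonoidAlgebra k (Matrix (Fin n) (Fin n) F) |
        ∃ m : Matrix (Fin n) (Fin n) F, Matrix.rank m ≤ r ∧
          y = MonoidAlgebra.single m (1 : k)}) :
    (∀ x ∈ Submodule.span k
        {y : MonoidAlgebra k (Matrix (Fin n) (Fin n) F) |
          ∃ m : Matrix (Fin n) (Fin n) F, Matrix.rank m ≤ r ∧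
            y = MonoidAlgebra.single m (1 : k)},
      u * x = x ∧ x * u = x) ↔
    ((∀ g : GL (Fin n) F,
        MonoidAlgebra.single ((g⁻¹ : GL (Fin n) F) : Matrix (Fin n) (Fin n) F) (1 : k) *
            u * MonoidAlgebra.single ((g : GL (Fin n) F) : Matrix (Fin n) (Fin n) F) (1 : k)
          = u) ∧
      u * MonoidAlgebra.single
            (Matrix.diagonal fun i : Fin n => if (i : ℕ) < r then (1 : F) else 0) (1 : k)
        = MonoidAlgebra.single
            (Matrix.diagonal fun i : Fin n => if (i : ℕ) < r then (1 : F) else 0) (1 : k)) := by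
  set e : Matrix (Fin n) (Fin n) F := diagonal fun i => if (i : ℕ) < r then 1 else 0
  have he_rank : e.rank = min n r := rank_diagonal_ite_val_lt n r
  have hS : ∀ a b m : Matrix (Fin n) (Fin n) F, m.rank ≤ r → (a * m * b).rank ≤ r :=
    fun a b m hm => (rank_mul_le_left _ _).trans ((rank_mul_le_right _ _).trans hm)
  have hfactor : ∀ m : Matrix (Fin n) (Fin n) F, m.rank ≤ r →
      ∃ (g : GL (Fin n) F) (t : Matrix (Fin n) (Fin n) F), m = g * e * t := fun m hm =>
    exists_eq_mul_mul_of_rank_le (isIdempotentElem_diagonal_ite _)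
      (he_rank ▸ le_min (rank_le_width m) hm)
  rw [span_setOf_single_eq_supported] at hu ⊢
  constructor
  · intro h
    exact ⟨single_inv_mul_mul_single_eq_of_isIdentityOn hS hu h,
      (h _ (single_one_mem_supported (he_rank.trans_le (min_le_right n r)))).1⟩
  · rintro ⟨hconj, he⟩
    exact isIdentityOn_supported_of_conj_eq transpose_mul transpose_transpose
      (fun m hm => (rank_transpose m).trans_le hm) hfactor hu hconj he

/-- Kuhn's criterion: let `F` be a finite field with `q = #F` invertible in `k`,
and `a_{n,r} ⊆ k[M_n]` the ideal spanned by matrices of rank `≤ r`.  An element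
`u ∈ a_{n,r}` is the two-sided unit of `a_{n,r}` if and only if
(1) `[g⁻¹]·u·[g] = u` for every `g ∈ GL_n(F)`, and
(2) `u·[e_{n,r}] = [e_{n,r}]` where `e_{n,r} = diag(I_r, 0_{n-r})`. -/
theorem kuhn_criterion (F : Type*) [Field F] [Fintype F] [DecidableEq F] (n r : ℕ)
    (hrn : r ≤ n) (k : Type*) [Field k] (hq : (Fintype.card F : k) ≠ 0)
    (u : MonoidAlgebra k (Matrix (Fin n) (Fin n) F))
    (hu : u ∈ Submodule.span k
      {y : MonoidAlgebra k (Matrix (Fin n) (Fin n) F) |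
        ∃ m : Matrix (Fin n) (Fin n) F, Matrix.rank m ≤ r ∧
          y = MonoidAlgebra.single m (1 : k)}) :
    (∀ x ∈ Submodule.span k
        {y : MonoidAlgebra k (Matrix (Fin n) (Fin n) F) |
          ∃ m : Matrix (Fin n) (Fin n) F, Matrix.rank m ≤ r ∧
            y = MonoidAlgebra.single m (1 : k)},
      u * x = x ∧ x * u = x) ↔
    ((∀ g : GL (Fin n) F,
        MonoidAlgebra.single ((g⁻¹ : GL (Fin n) F) : Matrix (Fin n) (Fin n) F) (1 : k) *
            u * MonoidAlgebra.single ((g : GL (Fin n) F) : Matrix (Fin n) (Fin n) F) (1 : k)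
          = u) ∧
      u * MonoidAlgebra.single
            (Matrix.diagonal fun i : Fin n => if (i : ℕ) < r then (1 : F) else 0) (1 : k)
        = MonoidAlgebra.single
            (Matrix.diagonal fun i : Fin n => if (i : ℕ) < r then (1 : F) else 0) (1 : k)) :=
  kuhn_criterion_general F n r k u hu
end

section
/- Let F be a finite field with q elements, k a field with q invertible in k, M_n the monoid of n×n matrices over F, and G_{n,r} the groupoid whose objects are r-dimensional subspaces of F^n and morphisms are linear isomorphisms. Define ψ_r : k[M_n] → k[G_{n,r}] by ψ_r([m]) = Σ_U [m|_U], summed over r-dimensional subspaces U with dim m(U) = r, where m|_U : U → m(U). Then ψ_r is a homomorphism of k-algebras. -/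
/-!
In `ψ(m) [f]` with `f : U → V` only the summand starting at `V` survives, giving
`[m|_V ∘ f]` (or `0` if `m` drops rank on `V`). Since restriction is compatible with
composition, `(m m')|_U = m|_{m' U} ∘ m'|_U`, and a rank drop of `m'` on `U` persists in
`m m'`, this turns `ψ(m) ψ(m')` term by term into `ψ(m m')`. For the unit, `ψ(1)` fixes
every basis element by left multiplication, hence equals `1`.
-/

open scoped Classical

section

variable (F : Type*) [Field F] (n r : ℕ)

/-- The objects of the groupoid `G_{n,r}`: `r`-dimensional subspaces of `F^n`. -/
def GrObj := {U : Submodule F (Fin n → F) // Module.finrank F ↥U = r}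

/-- The morphisms of the groupoid `G_{n,r}`: linear isomorphisms between
`r`-dimensional subspaces of `F^n`. -/
def GrMor := Σ U V : GrObj F n r, (↥U.1 ≃ₗ[F] ↥V.1)

/-- The restriction of a linear endomorphism `φ` of `F^n` to an isomorphism
`U ≃ φ(U)`, when `dim φ(U) = dim U`. -/
noncomputable def resEquiv (φ : (Fin n → F) →ₗ[F] (Fin n → F))
    (U : Submodule F (Fin n → F))
    (h : Module.finrank F ↥(U.map φ) = Module.finrank F ↥U) :
    ↥U ≃ₗ[F] ↥(U.map φ) :=
  LinearEquiv.ofBijective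
    ((φ.domRestrict U).codRestrict (U.map φ) fun x => Submodule.mem_map_of_mem x.2)
    (by
      have hsurj : Function.Surjective
          ((φ.domRestrict U).codRestrict (U.map φ) fun x => Submodule.mem_map_of_mem x.2) := by
        rintro ⟨y, hy⟩
        obtain ⟨x, hx, rfl⟩ := hy
        exact ⟨⟨x, hx⟩, rfl⟩
      exact ⟨(LinearMap.injective_iff_surjective_of_finrank_eq_finrank h.symm).mpr hsurj,
        hsurj⟩)

/-- The value of the map `ψ_r` on the basis element `[m]`:
`ψ_r([m]) = ∑_U [m|_U]`, summed over `r`-dimensional subspaces `U ⊆ F^n` with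
`dim m(U) = r`. -/
noncomputable def psiVal (k : Type*) [Field k] (B : Type*) [Ring B] [Algebra k B]
    (b : Module.Basis (GrMor F n r) k B) (m : Matrix (Fin n) (Fin n) F) : B :=
  ∑ᶠ U : GrObj F n r,
    if h : Module.finrank F ↥(U.1.map m.mulVecLin) = r then
      b ⟨U, ⟨U.1.map m.mulVecLin, h⟩,
        resEquiv F n m.mulVecLin U.1 (h.trans U.2.symm)⟩
    else 0

/-- The linear map `ψ_r : k[M_n] → k[G_{n,r}]`, defined on the basis by
`ψ_r([m]) = ∑_U [m|_U]`. -/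
noncomputable def psiMap (k : Type*) [Field k] (B : Type*) [Ring B] [Algebra k B]
    (b : Module.Basis (GrMor F n r) k B) :
    MonoidAlgebra k (Matrix (Fin n) (Fin n) F) →ₗ[k] B :=
  Finsupp.lift B k (Matrix (Fin n) (Fin n) F) (psiVal F n r k B b) ∘ₗ
    (MonoidAlgebra.coeffLinearEquiv k).toLinearMap

end

section

variable {F : Type*} [Field F] {n r : ℕ}

instance [Finite F] : Finite (GrObj F n r) :=
  inferInstanceAs (Finite {U : Submodule F (Fin n → F) // Module.finrank F U = r})

@[simp]
lemma resEquiv_apply (φ : (Fin n → F) →ₗ[F] (Fin n → F)) (U : Submodule F (Fin n → F))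
    (h : Module.finrank F (U.map φ) = Module.finrank F U) (x : U) :
    (resEquiv F n φ U h x : Fin n → F) = φ x :=
  rfl

lemma GrMor.mk_eq_mk {U V V' : GrObj F n r} (h : V = V') (f : U.1 ≃ₗ[F] V.1)
    (g : U.1 ≃ₗ[F] V'.1) (hfg : ∀ x, (f x : Fin n → F) = g x) :
    (⟨U, V, f⟩ : GrMor F n r) = ⟨U, V', g⟩ := by
  subst h
  rw [LinearEquiv.ext fun x => Subtype.ext (hfg x)]

variable {k : Type*} [Field k] {B : Type*} [Ring B] [Algebra k B]

def IsGroupoidBasis (b : Module.Basis (GrMor F n r) k B) : Prop :=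
  ∀ (U V U' V' : GrObj F n r) (f : U.1 ≃ₗ[F] V.1) (g : U'.1 ≃ₗ[F] V'.1),
    b ⟨U', V', g⟩ * b ⟨U, V, f⟩ =
      if h : V = U' then
        b ⟨U, V', f.trans ((LinearEquiv.ofEq V.1 U'.1 (congrArg Subtype.val h)).trans g)⟩
      else 0

variable [Finite F] {b : Module.Basis (GrMor F n r) k B}

lemma psiVal_mul_basis (hb : IsGroupoidBasis b) (m : Matrix (Fin n) (Fin n) F)
    (U V : GrObj F n r) (f : U.1 ≃ₗ[F] V.1) :
    psiVal F n r k B b m * b ⟨U, V, f⟩ =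
      if h : Module.finrank F (V.1.map m.mulVecLin) = r then
        b ⟨U, ⟨V.1.map m.mulVecLin, h⟩,
          f.trans (resEquiv F n m.mulVecLin V.1 (h.trans V.2.symm))⟩
      else 0 := by
  have := Fintype.ofFinite (GrObj F n r)
  rw [psiVal, finsum_eq_sum_of_fintype, Finset.sum_mul, Fintype.sum_eq_single V]
  · split_ifs with h
    · refine (hb _ _ _ _ _ _).trans ?_
      rw [dif_pos rfl]
      exact congrArg b (GrMor.mk_eq_mk rfl _ _ fun x => rfl)
    · exact zero_mul _
  · intro W hW
    split_ifs
    · exact (hb _ _ _ _ _ _).trans (dif_neg fun h => hW h.symm)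
    · exact zero_mul _

lemma psiVal_mul (hb : IsGroupoidBasis b) (m m' : Matrix (Fin n) (Fin n) F) :
    psiVal F n r k B b (m * m') = psiVal F n r k B b m * psiVal F n r k B b m' := by
  have := Fintype.ofFinite (GrObj F n r)
  rw [psiVal.eq_1 F n r k B b (m * m'), psiVal.eq_1 F n r k B b m', finsum_eq_sum_of_fintype,
    finsum_eq_sum_of_fintype, Finset.mul_sum]
  refine Finset.sum_congr rfl fun U _ => ?_
  have hmap : U.1.map (m * m').mulVecLin = (U.1.map m'.mulVecLin).map m.mulVecLin := by
    rw [Matrix.mulVecLin_mul, Submodule.map_comp]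
  by_cases h' : Module.finrank F (U.1.map m'.mulVecLin) = r
  · rw [dif_pos h']
    refine Eq.trans ?_ (psiVal_mul_basis hb m U _ _).symm
    by_cases h'' : Module.finrank F ((U.1.map m'.mulVecLin).map m.mulVecLin) = r
    · rw [dif_pos h'', dif_pos (hmap ▸ h'')]
      refine congrArg b (GrMor.mk_eq_mk (Subtype.ext hmap) _ _ fun x => ?_)
      simp [Matrix.mulVecLin_mul]
    · rw [dif_neg h'', dif_neg (hmap ▸ h'')]
  · have hdrop : Module.finrank F (U.1.map (m * m').mulVecLin) < r := by
      rw [hmap]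
      exact (Submodule.finrank_map_le _ _).trans_lt
        (((Submodule.finrank_map_le _ _).trans U.2.le).lt_of_ne h')
    rw [dif_neg h', dif_neg hdrop.ne, mul_zero]

lemma psiVal_one (hb : IsGroupoidBasis b) : psiVal F n r k B b 1 = 1 := by
  have hleft (i : GrMor F n r) : psiVal F n r k B b 1 * b i = b i := by
    obtain ⟨U, V, f⟩ := i
    have hV : V.1.map (1 : Matrix (Fin n) (Fin n) F).mulVecLin = V.1 := by
      rw [Matrix.mulVecLin_one, Submodule.map_id]
    refine (psiVal_mul_basis hb 1 U V f).trans ?_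
    rw [dif_pos (by rw [hV]; exact V.2)]
    exact congrArg b (GrMor.mk_eq_mk (Subtype.ext hV) _ _ fun x => by simp)
  have hmulLeft : LinearMap.mulLeft k (psiVal F n r k B b 1) = LinearMap.id :=
    b.ext fun i => hleft i
  simpa using LinearMap.congr_fun hmulLeft 1

variable (b) in
noncomputable def psiHom (hb : IsGroupoidBasis b) : Matrix (Fin n) (Fin n) F →* B where
  toFun := psiVal F n r k B b
  map_one' := psiVal_one hb
  map_mul' := psiVal_mul hb

lemma psiMap_apply_eq_lift (hb : IsGroupoidBasis b)
    (x : MonoidAlgebra k (Matrix (Fin n) (Fin n) F)) :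
    psiMap F n r k B b x = MonoidAlgebra.lift k B _ (psiHom b hb) x := by
  rw [MonoidAlgebra.lift_apply]
  exact Finsupp.lift_apply B k _ (psiVal F n r k B b) x.coeff

end

theorem psiMap_algHom_general (F : Type*) [Field F] [Fintype F] (n r : ℕ)
    (k : Type*) [Field k]
    (B : Type*) [Ring B] [Algebra k B]
    (b : Module.Basis (GrMor F n r) k B)
    (hmul : ∀ (U V U' V' : GrObj F n r)
      (f : ↥U.1 ≃ₗ[F] ↥V.1) (g : ↥U'.1 ≃ₗ[F] ↥V'.1),
      b ⟨U', V', g⟩ * b ⟨U, V, f⟩ =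
        if h : V = U' then
          b ⟨U, V', f.trans ((LinearEquiv.ofEq V.1 U'.1 (congrArg Subtype.val h)).trans g)⟩
        else 0) :
    psiMap F n r k B b 1 = 1 ∧
      ∀ x y : MonoidAlgebra k (Matrix (Fin n) (Fin n) F),
        psiMap F n r k B b (x * y) = psiMap F n r k B b x * psiMap F n r k B b y := by
  simp only [psiMap_apply_eq_lift (hb := hmul)]
  exact ⟨map_one _, map_mul _⟩

/-- Let `F` be a finite field with `q` elements invertible in the field `k`, and
let `B` be a `k`-algebra presenting the groupoid algebra `k[G_{n,r}]`: it has a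
basis indexed by the isomorphisms `f : U → V` between `r`-dimensional subspaces
of `F^n`, with products of basis elements given by composition when defined and
`0` otherwise.  Then `ψ_r : k[M_n] → B`, `[m] ↦ ∑_U [m|_U]`, is a homomorphism
of `k`-algebras. -/
theorem psiMap_algHom (F : Type*) [Field F] [Fintype F] (n r : ℕ)
    (k : Type*) [Field k] (hq : (Fintype.card F : k) ≠ 0)
    (B : Type*) [Ring B] [Algebra k B]
    (b : Module.Basis (GrMor F n r) k B)
    (hmul : ∀ (U V U' V' : GrObj F n r)
      (f : ↥U.1 ≃ₗ[F] ↥V.1) (g : ↥U'.1 ≃ₗ[F] ↥V'.1),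
      b ⟨U', V', g⟩ * b ⟨U, V, f⟩ =
        if h : V = U' then
          b ⟨U, V', f.trans ((LinearEquiv.ofEq V.1 U'.1 (congrArg Subtype.val h)).trans g)⟩
        else 0) :
    psiMap F n r k B b 1 = 1 ∧
      ∀ x y : MonoidAlgebra k (Matrix (Fin n) (Fin n) F),
        psiMap F n r k B b (x * y) = psiMap F n r k B b x * psiMap F n r k B b y :=
  psiMap_algHom_general F n r k B b hmul
end
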